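/- Let α(t) = (t⁶, t⁷ + t¹⁰ + t¹¹). Let ψ = (ψ₁, ψ₂) be a formal diffeomorphism of (ℂ²,0) and ρ a formal diffeomorphism of (ℂ,0) such that ψ₁(α(t)) = ρ(t)⁶ and ψ₂(α(t)) = ρ(t)⁷ + ρ(t)¹⁰ + ρ(t)¹¹ in ℂ[[t]] (i.e. ψ stabilizes the branch Γ₀ parametrized by α). Then the linear part of ψ is the identity: ψ₁ − x ∈ m² and ψ₂ − y ∈ m². -/

import Mathlib

open PowerSeries

/-- Substitution of `(x(t), y(t))` (both with zero constant term) into a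
two-variable formal power series. -/
noncomputable def substPS (xt yt : PowerSeries ℂ) (f : MvPowerSeries (Fin 2) ℂ) :
    PowerSeries ℂ :=
  PowerSeries.mk fun k =>
    ∑ ij ∈ Finset.range (k + 1) ×ˢ Finset.range (k + 1),
      MvPowerSeries.coeff (Finsupp.single 0 ij.1 + Finsupp.single 1 ij.2) f *
        PowerSeries.coeff k (xt ^ ij.1 * yt ^ ij.2)

/-- The maximal ideal of `ℂ[[x,y]]`: series with zero constant term. -/
noncomputable def mIdeal : Ideal (MvPowerSeries (Fin 2) ℂ) :=
  RingHom.ker (MvPowerSeries.constantCoeff : MvPowerSeries (Fin 2) ℂ →+* ℂ)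

/-- The linear part of a pair `(ψ₁, ψ₂)` of elements of the maximal ideal of
`ℂ[[x,y]]`: the matrix of degree-1 coefficients. -/
noncomputable def linPartPair (psi1 psi2 : MvPowerSeries (Fin 2) ℂ) :
    Matrix (Fin 2) (Fin 2) ℂ :=
  Matrix.of fun i j =>
    MvPowerSeries.coeff (Finsupp.single j 1) (if i = 0 then psi1 else psi2)

/-- The `x`-component `t⁶` of `α`. -/
noncomputable def alphaX : PowerSeries ℂ := PowerSeries.X ^ 6

/-- The `y`-component `t⁷ + t¹⁰ + t¹¹` of `α`. -/
noncomputable def alphaY : PowerSeries ℂ :=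
  PowerSeries.X ^ 7 + PowerSeries.X ^ 10 + PowerSeries.X ^ 11

/-!
Every monomial of degree at least two in `α` has order at least `12` in `t`, so modulo `t¹²` the
series `ψᵢ ∘ α` only sees the linear part `aᵢ x + bᵢ y` of `ψᵢ`. Write `ρ = t q` with
`c = q(0) ≠ 0`. Once `q ≡ c` modulo `tʲ`, the `j`-th coefficient of `qⁿ` is `n cⁿ⁻¹ q_j`, so the
coefficients of `t⁸, t⁹` in `ψ₂ ∘ α = ρ⁷ + ρ¹⁰ + ρ¹¹` and of `t⁷, t⁹, t¹⁰` in `ψ₁ ∘ α = ρ⁶` push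
this congruence up to `q ≡ c` modulo `t⁵` (and give `b₁ = 0`). The coefficients of `t⁷, t¹⁰, t¹¹`
in the second equation then read `b₂ = c⁷ = c¹⁰ = c¹¹`, hence `c = 1`, `a₁ = c⁶ = 1`, `b₂ = 1`,
while `a₂ = 0` is the coefficient of `t⁶` in the second equation.
-/

namespace PowerSeries

section CommSemiring

variable {R : Type*} [CommSemiring R]

theorem coeff_pow_mul_pow_eq_zero_of_lt {f g : R⟦X⟧} {m i j k : ℕ} (hf : X ^ m ∣ f)
    (hg : X ^ m ∣ g) (hk : k < m * (i + j)) : coeff k (f ^ i * g ^ j) = 0 := by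
  refine X_pow_dvd_iff.mp ?_ k hk
  rw [mul_add, pow_add, pow_mul, pow_mul]
  exact mul_dvd_mul (pow_dvd_pow_of_dvd hf i) (pow_dvd_pow_of_dvd hg j)

end CommSemiring

section CommRing

variable {R : Type*} [CommRing R] {q : R⟦X⟧} {c : R} {j : ℕ}

theorem coeff_eq_of_X_pow_dvd_sub {f g : R⟦X⟧} {i : ℕ} (h : X ^ j ∣ f - g) (hi : i < j) :
    coeff i f = coeff i g := by
  rw [← sub_eq_zero, ← map_sub]
  exact X_pow_dvd_iff.mp h i hi

theorem coeff_eq_of_X_pow_dvd_sub_C {i : ℕ} (hq : X ^ j ∣ q - C c) (hi : i < j) :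
    coeff i q = if i = 0 then c else 0 :=
  (coeff_eq_of_X_pow_dvd_sub hq hi).trans (coeff_C i c)

theorem X_pow_dvd_pow_sub_C_pow (hq : X ^ j ∣ q - C c) (n : ℕ) : X ^ j ∣ q ^ n - C (c ^ n) := by
  rw [map_pow]
  exact hq.trans (sub_dvd_pow_sub_pow _ _ n)

theorem coeff_pow_of_X_pow_dvd_sub_C (hj : 0 < j) (hq : X ^ j ∣ q - C c) (n : ℕ) :
    coeff j (q ^ n) = n * c ^ (n - 1) * coeff j q := by
  obtain ⟨b, hb⟩ := hq
  rw [sub_eq_iff_eq_add'] at hb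
  have hX : (X : R⟦X⟧) ^ (j + 1) ∣ (X ^ j * b) ^ 2 :=
    (pow_dvd_pow _ (by omega : j + 1 ≤ j * 2)).trans
      (by rw [pow_mul, mul_pow]; exact dvd_mul_right _ _)
  have hlin : C c ^ (n - 1) * (X ^ j * b) * (n : R⟦X⟧) + C c ^ n =
      C (c ^ n) + X ^ j * (C (n * c ^ (n - 1)) * b) := by
    simp only [map_mul, map_natCast, map_pow]
    ring
  have hdvd := hX.trans (sq_dvd_add_pow_sub_sub (X ^ j * b) (C c) n)
  rw [sub_sub, hlin, ← hb] at hdvd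
  rw [coeff_eq_of_X_pow_dvd_sub hdvd (lt_add_one j), hb]
  simp only [map_add, coeff_C, coeff_X_pow_mul', coeff_C_mul, if_neg hj.ne', if_pos le_rfl,
    Nat.sub_self, zero_add]

end CommRing

theorem X_pow_succ_dvd_sub_C {K : Type*} [Field K] [CharZero K] {q : K⟦X⟧} {c : K} {j n : ℕ}
    (hj : 0 < j) (hc : c ≠ 0) (hn : n ≠ 0) (hq : X ^ j ∣ q - C c) (h : coeff j (q ^ n) = 0) :
    X ^ (j + 1) ∣ q - C c := by
  rw [coeff_pow_of_X_pow_dvd_sub_C hj hq] at h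
  refine X_pow_dvd_iff.mpr fun i hi => ?_
  rcases (Nat.lt_succ_iff.mp hi).lt_or_eq with hi | rfl
  · exact X_pow_dvd_iff.mp hq i hi
  · simpa [coeff_C, hj.ne', hn, hc] using h

end PowerSeries

namespace MvPowerSeries

theorem mem_ker_constantCoeff_sq {R : Type*} [CommRing R] {f : MvPowerSeries (Fin 2) R}
    (h0 : constantCoeff f = 0) (hx : coeff (Finsupp.single 0 1) f = 0)
    (hy : coeff (Finsupp.single 1 1) f = 0) :
    f ∈ RingHom.ker (constantCoeff (σ := Fin 2) (R := R)) ^ 2 := by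
  classical
  let a : MvPowerSeries (Fin 2) R := fun d => if d 0 = 0 then coeff d f else 0
  have ha : ∀ d, coeff d a = if d 0 = 0 then coeff d f else 0 := fun _ => rfl
  obtain ⟨g, hg⟩ : X 0 ∣ f - a := X_dvd_iff.mpr fun d hd => by simp [ha, hd]
  obtain ⟨h, hh⟩ : X 1 ∣ a := X_dvd_iff.mpr fun d hd => by
    by_cases hd0 : d 0 = 0
    · have hd : d = 0 := by ext i; fin_cases i <;> simp [hd0, hd]
      simp [ha, hd, h0]
    · simp [ha, hd0]
  have hg0 : constantCoeff g = 0 := by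
    have hgx := congrArg (coeff (Finsupp.single 0 1)) hg
    rw [X_def, coeff_monomial_mul] at hgx
    simpa [ha, hx] using hgx.symm
  have hh0 : constantCoeff h = 0 := by
    have hhy := congrArg (coeff (Finsupp.single 1 1)) hh
    rw [X_def, coeff_monomial_mul] at hhy
    simpa [ha, hy] using hhy.symm
  rw [← sub_add_cancel f a, hg, hh, sq]
  exact Ideal.add_mem _ (Ideal.mul_mem_mul (constantCoeff_X 0) hg0)
    (Ideal.mul_mem_mul (constantCoeff_X 1) hh0)

end MvPowerSeries

theorem X_pow_dvd_substPS_sub_linear {xt yt : ℂ⟦X⟧} {m : ℕ} (hx : X ^ m ∣ xt) (hy : X ^ m ∣ yt)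
    {f : MvPowerSeries (Fin 2) ℂ} (hf : f ∈ mIdeal) :
    X ^ (2 * m) ∣ substPS xt yt f - (C (MvPowerSeries.coeff (Finsupp.single 0 1) f) * xt +
      C (MvPowerSeries.coeff (Finsupp.single 1 1) f) * yt) := by
  refine X_pow_dvd_iff.mpr fun k hk => ?_
  rw [map_sub, sub_eq_zero, substPS, coeff_mk, map_add, coeff_C_mul, coeff_C_mul]
  rcases Nat.eq_zero_or_pos k with rfl | hk0
  · have h0 : ∀ φ : ℂ⟦X⟧, X ^ m ∣ φ → coeff 0 φ = 0 := fun φ h =>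
      X_pow_dvd_iff.mp h 0 (by omega)
    simpa [h0 xt hx, h0 yt hy] using RingHom.mem_ker.mp hf
  rw [Finset.sum_eq_add_of_mem (1, 0) (0, 1) (by simp; omega) (by simp; omega) (by simp)]
  · simp
  rintro ⟨i, j⟩ - hij
  simp only [ne_eq, Prod.mk.injEq, not_and] at hij
  by_cases h00 : i = 0 ∧ j = 0
  · simp [h00.1, h00.2, coeff_one, hk0.ne']
  refine mul_eq_zero_of_right _ (coeff_pow_mul_pow_eq_zero_of_lt hx hy (hk.trans_le ?_))
  rw [mul_comm]
  exact Nat.mul_le_mul_left _ (by omega)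

theorem linear_coeffs_eq_identity_of_X_pow_twelve_dvd {ρ : ℂ⟦X⟧} (hρ0 : constantCoeff ρ = 0)
    (hρ1 : coeff 1 ρ ≠ 0) {a₁ b₁ a₂ b₂ : ℂ}
    (h₁ : X ^ 12 ∣ ρ ^ 6 - (C a₁ * alphaX + C b₁ * alphaY))
    (h₂ : X ^ 12 ∣ ρ ^ 7 + ρ ^ 10 + ρ ^ 11 - (C a₂ * alphaX + C b₂ * alphaY)) :
    a₁ = 1 ∧ b₁ = 0 ∧ a₂ = 0 ∧ b₂ = 1 := by
  obtain ⟨q, rfl⟩ := X_dvd_iff.mpr hρ0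
  have e₁ := fun k (hk : k < 12) => coeff_eq_of_X_pow_dvd_sub h₁ hk
  have e₂ := fun k (hk : k < 12) => coeff_eq_of_X_pow_dvd_sub h₂ hk
  simp only [mul_pow, map_add, coeff_X_pow_mul', coeff_C_mul, alphaX, alphaY, coeff_X_pow] at e₁ e₂
  -- `sₖ` and `tₖ` compare the coefficients of `tᵏ` in `h₁` and `h₂`.
  have s6 := e₁ 6 (by norm_num); have s7 := e₁ 7 (by norm_num)
  have s9 := e₁ 9 (by norm_num); have s10 := e₁ 10 (by norm_num)
  have t6 := e₂ 6 (by norm_num); have t7 := e₂ 7 (by norm_num); have t8 := e₂ 8 (by norm_num)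
  have t9 := e₂ 9 (by norm_num); have t10 := e₂ 10 (by norm_num); have t11 := e₂ 11 (by norm_num)
  norm_num at s6 s7 s9 s10 t6 t7 t8 t9 t10 t11
  set c := constantCoeff q with hc_def
  have hc : c ≠ 0 := by simpa [hc_def, coeff_succ_X_mul] using hρ1
  have d₁ : X ^ 1 ∣ q - C c := by rw [pow_one, X_dvd_iff]; simp [hc_def]
  have d₂ := X_pow_succ_dvd_sub_C one_pos hc (by norm_num) d₁ t8
  have d₃ := X_pow_succ_dvd_sub_C two_pos hc (by norm_num) d₂ t9
  have d₄ := X_pow_succ_dvd_sub_C three_pos hc (by norm_num) d₃ s9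
  have hb₁ : b₁ = 0 := by
    rw [← s7, coeff_eq_of_X_pow_dvd_sub_C (X_pow_dvd_pow_sub_C_pow d₄ 6) (by norm_num),
      if_neg one_ne_zero]
  have d₅ := X_pow_succ_dvd_sub_C four_pos hc (by norm_num) d₄ (s10.trans hb₁)
  have hqn : ∀ n, ∀ i < 5, coeff i (q ^ n) = if i = 0 then c ^ n else 0 :=
    fun n i hi => coeff_eq_of_X_pow_dvd_sub_C (X_pow_dvd_pow_sub_C_pow d₅ n) hi
  simp only [hqn _ 1 (by norm_num), hqn _ 3 (by norm_num), hqn _ 4 (by norm_num)] at t10 t11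
  norm_num at t10 t11
  have hc₃ : c ^ 3 = 1 := mul_left_cancel₀ (pow_ne_zero 7 hc) (by linear_combination t10 - t7)
  have hc₄ : c ^ 4 = 1 := mul_left_cancel₀ (pow_ne_zero 7 hc) (by linear_combination t11 - t7)
  have hc₁ : c = 1 := by linear_combination hc₄ - c * hc₃
  refine ⟨?_, hb₁, t6.symm, ?_⟩
  · rw [← s6, hc₁, one_pow]
  · rw [← t7, hc₁, one_pow]

theorem stabilizer_of_gamma0_has_identity_linear_part_general
    (psi1 psi2 : MvPowerSeries (Fin 2) ℂ)
    (hpsi1 : psi1 ∈ mIdeal) (hpsi2 : psi2 ∈ mIdeal)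
    (rho : PowerSeries ℂ)
    (hrho0 : PowerSeries.constantCoeff rho = 0)
    (hrho1 : PowerSeries.coeff 1 rho ≠ 0)
    (h1 : substPS alphaX alphaY psi1 = rho ^ 6)
    (h2 : substPS alphaX alphaY psi2 = rho ^ 7 + rho ^ 10 + rho ^ 11) :
    psi1 - MvPowerSeries.X 0 ∈ mIdeal ^ 2 ∧ psi2 - MvPowerSeries.X 1 ∈ mIdeal ^ 2 := by
  have hx : X ^ 6 ∣ alphaX := dvd_rfl
  have hy : X ^ 6 ∣ alphaY := ⟨X + X ^ 4 + X ^ 5, by rw [alphaY]; ring⟩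
  obtain ⟨ha₁, hb₁, ha₂, hb₂⟩ := linear_coeffs_eq_identity_of_X_pow_twelve_dvd hrho0 hrho1
    (h1 ▸ X_pow_dvd_substPS_sub_linear hx hy hpsi1) (h2 ▸ X_pow_dvd_substPS_sub_linear hx hy hpsi2)
  constructor <;> apply MvPowerSeries.mem_ker_constantCoeff_sq <;>
    simp [MvPowerSeries.coeff_X, Finsupp.single_eq_single_iff, RingHom.mem_ker.mp hpsi1,
      RingHom.mem_ker.mp hpsi2, ha₁, hb₁, ha₂, hb₂]

theorem stabilizer_of_gamma0_has_identity_linear_part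
    (psi1 psi2 : MvPowerSeries (Fin 2) ℂ)
    (hpsi1 : psi1 ∈ mIdeal) (hpsi2 : psi2 ∈ mIdeal)
    (hlin : IsUnit (linPartPair psi1 psi2).det)
    (rho : PowerSeries ℂ)
    (hrho0 : PowerSeries.constantCoeff rho = 0)
    (hrho1 : PowerSeries.coeff 1 rho ≠ 0)
    (h1 : substPS alphaX alphaY psi1 = rho ^ 6)
    (h2 : substPS alphaX alphaY psi2 = rho ^ 7 + rho ^ 10 + rho ^ 11) :
    psi1 - MvPowerSeries.X 0 ∈ mIdeal ^ 2 ∧ psi2 - MvPowerSeries.X 1 ∈ mIdeal ^ 2 :=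
  stabilizer_of_gamma0_has_identity_linear_part_general psi1 psi2 hpsi1 hpsi2 rho hrho0 hrho1 h1 h2
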